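/- Let X be a finite nonempty set, q : X → {0,1} a binary statistical query, and D_t a distribution on X with D_t(x) > 0 for all x ∈ X. Set m = q(D_t) and assume 0 < m < 1; let a ∈ (0,1). Let D_{t+1}(x) = D_t(x) · w^{q(x)} / (m·w + (1−m)) with w = a(1−m)/((1−a)m) be the exponential-weights projection update. Then for every distribution D on X with q(D) = a, the Pythagorean identity KL(D‖D_t) = KL(D‖D_{t+1}) + KL(D_{t+1}‖D_t) holds; consequently, D_{t+1} is the unique minimizer of KL(D‖D_t) over all distributions D on X satisfying q(D) = a. -/
import Mathlib

/-- Gibbs' inequality for finite distributions: nonnegativity of KL with equality case. -/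
lemma gibbs_aux {X : Type*} [Fintype X] (D V : X → ℝ)
    (hD0 : ∀ x, 0 ≤ D x) (hD1 : ∑ x, D x = 1)
    (hV0 : ∀ x, 0 < V x) (hV1 : ∑ x, V x = 1) :
    0 ≤ ∑ x, D x * Real.log (D x / V x) ∧
      ((∑ x, D x * Real.log (D x / V x)) = 0 → D = V) := by
  have key : ∀ x, D x - V x ≤ D x * Real.log (D x / V x) := by
    intro x
    rcases eq_or_lt_of_le (hD0 x) with h0 | h0
    · simp [← h0]
      linarith [(hV0 x).le]
    · have hlog : Real.log (V x / D x) ≤ V x / D x - 1 :=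
        Real.log_le_sub_one_of_pos (div_pos (hV0 x) h0)
      have hlogeq : Real.log (D x / V x) = - Real.log (V x / D x) := by
        rw [Real.log_div (ne_of_gt h0) (ne_of_gt (hV0 x)),
            Real.log_div (ne_of_gt (hV0 x)) (ne_of_gt h0)]
        ring
      rw [hlogeq]
      have := mul_le_mul_of_nonneg_left hlog (le_of_lt h0)
      have hne : D x ≠ 0 := ne_of_gt h0
      have : D x * (V x / D x - 1) = V x - D x := by field_simp
      nlinarith [mul_le_mul_of_nonneg_left hlog (le_of_lt h0)]
  have hsum : ∑ x, (D x - V x) ≤ ∑ x, D x * Real.log (D x / V x) :=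
    Finset.sum_le_sum (fun x _ => key x)
  have hzero : ∑ x, (D x - V x) = 0 := by
    rw [Finset.sum_sub_distrib, hD1, hV1]; ring
  constructor
  · linarith
  · intro heq
    by_contra hne
    have : ∃ x, D x ≠ V x := by
      by_contra h
      push_neg at h
      exact hne (funext h)
    obtain ⟨x0, hx0⟩ := this
    have strict : D x0 - V x0 < D x0 * Real.log (D x0 / V x0) := by
      rcases eq_or_lt_of_le (hD0 x0) with h0 | h0
      · simp [← h0]
        exact hV0 x0
      · have hdv : V x0 / D x0 ≠ 1 := by
          intro h
          apply hx0
          field_simp at h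
          linarith
        have hlog : Real.log (V x0 / D x0) < V x0 / D x0 - 1 :=
          Real.log_lt_sub_one_of_pos (div_pos (hV0 x0) h0) hdv
        have hlogeq : Real.log (D x0 / V x0) = - Real.log (V x0 / D x0) := by
          rw [Real.log_div (ne_of_gt h0) (ne_of_gt (hV0 x0)),
              Real.log_div (ne_of_gt (hV0 x0)) (ne_of_gt h0)]
          ring
        rw [hlogeq]
        have hne' : D x0 ≠ 0 := ne_of_gt h0
        have heq' : D x0 * (V x0 / D x0 - 1) = V x0 - D x0 := by field_simp
        nlinarith [mul_lt_mul_of_pos_left hlog h0]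
    have : ∑ x, (D x - V x) < ∑ x, D x * Real.log (D x / V x) :=
      Finset.sum_lt_sum (fun x _ => key x) ⟨x0, Finset.mem_univ x0, strict⟩
    rw [hzero, heq] at this
    exact lt_irrefl 0 this

/-- Pythagorean identity for the PEP exponential-weights projection step. -/
theorem pep_projection_pythagorean
    {X : Type*} [Fintype X] [Nonempty X]
    (q : X → ℝ) (hq : ∀ x, q x = 0 ∨ q x = 1)
    (Dt : X → ℝ) (hDt0 : ∀ x, 0 < Dt x) (hDt1 : ∑ x, Dt x = 1)
    (m : ℝ) (hm : m = ∑ x, q x * Dt x)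
    (hm0 : 0 < m) (hm1 : m < 1)
    (a : ℝ) (ha0 : 0 < a) (ha1 : a < 1)
    (w : ℝ) (hw : w = a * (1 - m) / ((1 - a) * m))
    (KL : (X → ℝ) → (X → ℝ) → ℝ)
    (hKL : ∀ D V : X → ℝ, KL D V = ∑ x, D x * Real.log (D x / V x))
    (Dnext : X → ℝ)
    (hDnext : ∀ x, Dnext x = Dt x * w ^ (q x) / (m * w + (1 - m))) :
    (∀ D : X → ℝ, (∀ x, 0 ≤ D x) → (∑ x, D x = 1) →
      (∑ x, q x * D x) = a →
      KL D Dt = KL D Dnext + KL Dnext Dt) ∧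
    (∀ D : X → ℝ, (∀ x, 0 ≤ D x) → (∑ x, D x = 1) →
      (∑ x, q x * D x) = a →
      KL Dnext Dt ≤ KL D Dt ∧ (KL D Dt = KL Dnext Dt → D = Dnext)) := by
  have hw0 : 0 < w := by
    rw [hw]
    apply div_pos
    · nlinarith
    · nlinarith
  set Z : ℝ := m * w + (1 - m) with hZdef
  have hZ0 : 0 < Z := by
    have : 0 < m * w := mul_pos hm0 hw0
    simp only [hZdef]; linarith
  have hpow : ∀ x, w ^ (q x) = 1 + q x * (w - 1) := by
    intro x
    rcases hq x with h | h <;> rw [h] <;> simp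
  have hNextpos : ∀ x, 0 < Dnext x := by
    intro x
    rw [hDnext x]
    apply div_pos (mul_pos (hDt0 x) _) hZ0
    rw [hpow x]
    rcases hq x with h | h <;> rw [h] <;> simp <;> linarith
  have hNextsum : ∑ x, Dnext x = 1 := by
    have : ∑ x, Dnext x = (∑ x, Dt x * (1 + q x * (w - 1))) / Z := by
      rw [Finset.sum_div]
      exact Finset.sum_congr rfl (fun x _ => by rw [hDnext x, hpow x])
    rw [this]
    have hexp : ∑ x, Dt x * (1 + q x * (w - 1)) = Z := by
      have : ∀ x, Dt x * (1 + q x * (w - 1)) = Dt x + (q x * Dt x) * (w - 1) := by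
        intro x; ring
      rw [Finset.sum_congr rfl (fun x _ => this x), Finset.sum_add_distrib, hDt1,
          ← Finset.sum_mul, ← hm]
      simp only [hZdef]; ring
    rw [hexp, div_self (ne_of_gt hZ0)]
  have hqNext : ∑ x, q x * Dnext x = a := by
    have step : ∀ x, q x * Dnext x = (q x * Dt x) * w / Z := by
      intro x
      rw [hDnext x]
      rcases hq x with h | h <;> rw [h] <;> simp [Real.rpow_one] <;> ring
    rw [Finset.sum_congr rfl (fun x _ => step x)]
    have : ∑ x, q x * Dt x * w / Z = (∑ x, q x * Dt x) * w / Z := by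
      rw [← Finset.sum_div, ← Finset.sum_mul]
    rw [this, ← hm]
    have hma : 1 - m ≠ 0 := by linarith
    have haa : 1 - a ≠ 0 := by linarith
    have key : m * w = a * Z := by
      simp only [hZdef]; rw [hw]; field_simp; ring
    rw [key, mul_div_assoc, div_self (ne_of_gt hZ0), mul_one]
  have hlogNext : ∀ x, Real.log (Dnext x / Dt x) = q x * Real.log w - Real.log Z := by
    intro x
    have h1 : Dnext x / Dt x = w ^ (q x) / Z := by
      rw [hDnext x]
      field_simp [ne_of_gt (hDt0 x), ne_of_gt hZ0]
    have hwq : (0:ℝ) < w ^ (q x) := Real.rpow_pos_of_pos hw0 _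
    rw [h1, Real.log_div (ne_of_gt hwq) (ne_of_gt hZ0), Real.log_rpow hw0]
  have hB : KL Dnext Dt = a * Real.log w - Real.log Z := by
    rw [hKL]
    have : ∀ x, Dnext x * Real.log (Dnext x / Dt x)
        = (q x * Dnext x) * Real.log w - Dnext x * Real.log Z := by
      intro x; rw [hlogNext x]; ring
    rw [Finset.sum_congr rfl (fun x _ => this x), Finset.sum_sub_distrib,
        ← Finset.sum_mul, ← Finset.sum_mul, hqNext, hNextsum]
    ring
  have hA : ∀ D : X → ℝ, (∀ x, 0 ≤ D x) → (∑ x, D x = 1) →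
      (∑ x, q x * D x) = a →
      KL D Dt = KL D Dnext + (a * Real.log w - Real.log Z) := by
    intro D hD0 hD1 hDa
    rw [hKL, hKL]
    have point : ∀ x, D x * Real.log (D x / Dt x)
        = D x * Real.log (D x / Dnext x)
          + ((q x * D x) * Real.log w - D x * Real.log Z) := by
      intro x
      rcases eq_or_lt_of_le (hD0 x) with h0 | h0
      · simp [← h0]
      · have l1 : Real.log (D x / Dt x) = Real.log (D x) - Real.log (Dt x) :=
          Real.log_div (ne_of_gt h0) (ne_of_gt (hDt0 x))
        have l2 : Real.log (D x / Dnext x) = Real.log (D x) - Real.log (Dnext x) :=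
          Real.log_div (ne_of_gt h0) (ne_of_gt (hNextpos x))
        have l3 : Real.log (Dnext x) - Real.log (Dt x) = q x * Real.log w - Real.log Z := by
          rw [← Real.log_div (ne_of_gt (hNextpos x)) (ne_of_gt (hDt0 x))]
          exact hlogNext x
        rw [l1, l2]
        nlinarith [l3]
    rw [Finset.sum_congr rfl (fun x _ => point x), Finset.sum_add_distrib,
        Finset.sum_sub_distrib, ← Finset.sum_mul, ← Finset.sum_mul, hDa, hD1]
    ring
  constructor
  · intro D hD0 hD1 hDa
    rw [hA D hD0 hD1 hDa, hB]
  · intro D hD0 hD1 hDa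
    have hpy : KL D Dt = KL D Dnext + KL Dnext Dt := by
      rw [hA D hD0 hD1 hDa, hB]
    have hgibbs := gibbs_aux D Dnext hD0 hD1 hNextpos hNextsum
    have hKLpos : 0 ≤ KL D Dnext := by rw [hKL]; exact hgibbs.1
    constructor
    · linarith
    · intro heq
      have : KL D Dnext = 0 := by linarith
      rw [hKL] at this
      exact hgibbs.2 this
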